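/- Let k be a positive integer and suppose a unit vector φ ∈ ℂ^{2^n} lies in the ℂ-span of k unit vectors s_1,…,s_k that belong to BW_n. Then for every δ₀ > 0 there exist c ∈ ℂ* and ψ ∈ BW_n with ‖cφ − ψ‖ ≤ δ₀·|c| and |c|² ≤ 2k/δ₀². In particular, N_{δ₀}(φ) ≤ 2k/δ₀², where N_δ(φ) = min{‖cφ‖² : c(φ+η) ∈ BW_n for some η with ‖η‖ ≤ δ}. -/

import Mathlib

/-- Generator `|x̃⟩` of the Barnes Wall lattice: the tensor product of `|0⟩`
(where `x i = false`) and `(1/(1+i))(|0⟩+|1⟩)` (where `x i = true`). -/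
noncomputable def bwGen (n : ℕ) (x : Fin n → Bool) :
    EuclideanSpace ℂ (Fin n → Fin 2) :=
  WithLp.toLp 2 (fun y => ∏ i : Fin n,
    (if x i then (1 + Complex.I)⁻¹ else if y i = 0 then 1 else 0))

/-- Membership in the Barnes Wall lattice `BW_n`: the `GaussianInt`-span of the `bwGen n x`. -/
def memBW (n : ℕ) (v : EuclideanSpace ℂ (Fin n → Fin 2)) : Prop :=
  ∃ a : (Fin n → Bool) → GaussianInt,
    v = ∑ x : Fin n → Bool, (GaussianInt.toComplex (a x)) • bwGen n x

/-- The approximate Barnes Wall norm `N_δ(φ)`. -/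
noncomputable def bwNormApprox (n : ℕ) (δ : ℝ)
    (φ : EuclideanSpace ℂ (Fin n → Fin 2)) : ℝ :=
  sInf {r : ℝ | ∃ (c : ℂ) (η : EuclideanSpace ℂ (Fin n → Fin 2)),
    c ≠ 0 ∧ ‖η‖ ≤ δ ∧ memBW n (c • (φ + η)) ∧ r = ‖c • φ‖ ^ 2}


/-!
Babai's nearest-plane rounding: peel off the last vector `u` of the family, round its coefficient
to the nearest Gaussian integer, and split the error into a part in the span `W` of the other
vectors (handled by induction) and a part orthogonal to `W` of squared norm at most `1/2`. Hence
any `v` in the `ℂ`-span of `k` vectors of norm `≤ 1` lies within `√(k/2)` of their `ℤ[i]`-span.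
Scaling `φ` by `c = √(2k)/δ₀` makes this distance at most `δ₀ |c|`, and `ℤ[i]`-combinations of
lattice vectors stay in `BW_n`.
-/

open Submodule

namespace GaussianInt

theorem exists_sq_norm_sub_le_half (z : ℂ) : ∃ a : GaussianInt, ‖z - a‖ ^ 2 ≤ 1 / 2 := by
  refine ⟨⟨round z.re, round z.im⟩, ?_⟩
  have hre : |z.re - round z.re| ≤ 1 / 2 := abs_sub_round z.re
  have him : |z.im - round z.im| ≤ 1 / 2 := abs_sub_round z.im
  have hnorm : ‖z - (⟨round z.re, round z.im⟩ : GaussianInt)‖ ^ 2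
      = (z.re - round z.re) ^ 2 + (z.im - round z.im) ^ 2 := by
    rw [Complex.sq_norm, Complex.normSq_apply, toComplex_def']
    simp only [Complex.sub_re, Complex.sub_im, Complex.add_re, Complex.add_im, Complex.mul_re,
      Complex.mul_im, Complex.intCast_re, Complex.intCast_im, Complex.I_re, Complex.I_im]
    ring
  rw [hnorm]
  nlinarith [sq_abs (z.re - round z.re), sq_abs (z.im - round z.im),
    abs_nonneg (z.re - round z.re), abs_nonneg (z.im - round z.im)]

end GaussianInt

section NearestPlane

variable {E : Type*} [NormedAddCommGroup E] [InnerProductSpace ℂ E]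

theorem norm_add_sq_of_mem_of_mem_orthogonal {W : Submodule ℂ E} {w r : E} (hw : w ∈ W)
    (hr : r ∈ Wᗮ) : ‖w + r‖ ^ 2 = ‖w‖ ^ 2 + ‖r‖ ^ 2 := by
  simp only [sq]
  exact norm_add_sq_eq_norm_sq_add_norm_sq_of_inner_eq_zero _ _
    (inner_right_of_mem_orthogonal hw hr)

theorem exists_smul_sub_gaussianInt_smul_eq_add (W : Submodule ℂ E) [W.HasOrthogonalProjection]
    {u : E} (hu : ‖u‖ ≤ 1) (b : ℂ) :
    ∃ (a : GaussianInt) (w r : E),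
      w ∈ W ∧ r ∈ Wᗮ ∧ ‖r‖ ^ 2 ≤ 1 / 2 ∧ b • u - (a : ℂ) • u = w + r := by
  obtain ⟨a, ha⟩ := GaussianInt.exists_sq_norm_sub_le_half b
  refine ⟨a, (b - a) • W.starProjection u, (b - a) • Wᗮ.starProjection u,
    W.smul_mem _ (W.starProjection_apply_mem u), Wᗮ.smul_mem _ (Wᗮ.starProjection_apply_mem u),
    ?_, ?_⟩
  · have hperp : ‖Wᗮ.starProjection u‖ ^ 2 ≤ 1 := by
      have := Wᗮ.norm_starProjection_apply_le u
      nlinarith [norm_nonneg (Wᗮ.starProjection u)]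
    rw [norm_smul, mul_pow]
    nlinarith [sq_nonneg ‖b - a‖]
  · rw [← smul_add, starProjection_add_starProjection_orthogonal, sub_smul]

theorem exists_gaussianInt_sum_smul_near {k : ℕ} (s : Fin k → E) (hs : ∀ j, ‖s j‖ ≤ 1) {v : E}
    (hv : v ∈ span ℂ (Set.range s)) :
    ∃ a : Fin k → GaussianInt, ‖v - ∑ j, (a j : ℂ) • s j‖ ^ 2 ≤ k / 2 := by
  induction k generalizing v with
  | zero => simp_all
  | succ k ih =>
    obtain ⟨b, rfl⟩ := (mem_span_range_iff_exists_fun ℂ).mp hv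
    set W := span ℂ (Set.range (Fin.init s))
    have : FiniteDimensional ℂ W := FiniteDimensional.span_of_finite ℂ (Set.finite_range _)
    obtain ⟨aL, w, r, hw, hr, hr2, hsplit⟩ :=
      exists_smul_sub_gaussianInt_smul_eq_add W (hs (Fin.last k)) (b (Fin.last k))
    have hspanW (c : Fin k → ℂ) : ∑ j, c j • Fin.init s j ∈ W :=
      sum_mem fun j _ => smul_mem _ _ (subset_span ⟨j, rfl⟩)
    set x := ∑ j, b j.castSucc • Fin.init s j + w
    obtain ⟨a', ha'⟩ := ih (Fin.init s) (fun j => hs _) (add_mem (hspanW _) hw : x ∈ W)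
    refine ⟨Fin.snoc a' aL, ?_⟩
    have hdecomp : ∑ j, b j • s j - ∑ j, (Fin.snoc (α := fun _ => GaussianInt) a' aL j : ℂ) • s j
        = (x - ∑ j, (a' j : ℂ) • Fin.init s j) + r := by
      simp only [x, Fin.sum_univ_castSucc, Fin.snoc_castSucc, Fin.snoc_last, Fin.init]
      linear_combination (norm := module) hsplit
    have hres : x - ∑ j, (a' j : ℂ) • Fin.init s j ∈ W :=
      sub_mem (add_mem (hspanW _) hw) (hspanW _)
    rw [hdecomp, norm_add_sq_of_mem_of_mem_orthogonal hres hr]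
    push_cast
    linarith

end NearestPlane

theorem memBW_sum_smul {n k : ℕ} (s : Fin k → EuclideanSpace ℂ (Fin n → Fin 2))
    (hs : ∀ j, memBW n (s j)) (a : Fin k → GaussianInt) :
    memBW n (∑ j, (a j : ℂ) • s j) := by
  choose c hc using hs
  refine ⟨fun x => ∑ j, a j * c j x, ?_⟩
  simp only [map_sum, map_mul, Finset.sum_smul, mul_smul]
  rw [Finset.sum_comm]
  simp only [hc, Finset.smul_sum]

theorem bwNormApprox_le_sq_norm_smul {n : ℕ} {δ : ℝ} {φ ψ : EuclideanSpace ℂ (Fin n → Fin 2)}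
    {c : ℂ} (hc : c ≠ 0) (hψ : memBW n ψ) (hclose : ‖c • φ - ψ‖ ≤ δ * ‖c‖) :
    bwNormApprox n δ φ ≤ ‖c • φ‖ ^ 2 := by
  refine csInf_le ⟨0, fun r ⟨_, _, _, _, _, hr⟩ => hr ▸ sq_nonneg _⟩
    ⟨c, c⁻¹ • ψ - φ, hc, ?_, by rwa [add_sub_cancel, smul_inv_smul₀ hc], rfl⟩
  have hη : c⁻¹ • ψ - φ = -c⁻¹ • (c • φ - ψ) := by
    rw [neg_smul, smul_sub, inv_smul_smul₀ hc, neg_sub]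
  rw [hη, norm_smul, norm_neg, norm_inv, inv_mul_le_iff₀ (norm_pos_iff.mpr hc), mul_comm]
  exact hclose

theorem stmt_15 (n k : ℕ) (hk : 0 < k)
    (s : Fin k → EuclideanSpace ℂ (Fin n → Fin 2))
    (hs : ∀ j, ‖s j‖ = 1) (hsBW : ∀ j, memBW n (s j))
    (φ : EuclideanSpace ℂ (Fin n → Fin 2)) (hφ : ‖φ‖ = 1)
    (hspan : φ ∈ Submodule.span ℂ (Set.range s)) :
    ∀ δ₀ : ℝ, 0 < δ₀ →
      (∃ (c : ℂ) (ψ : EuclideanSpace ℂ (Fin n → Fin 2)), c ≠ 0 ∧ memBW n ψ ∧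
        ‖c • φ - ψ‖ ≤ δ₀ * ‖c‖ ∧ ‖c‖ ^ 2 ≤ 2 * k / δ₀ ^ 2) ∧
      bwNormApprox n δ₀ φ ≤ 2 * k / δ₀ ^ 2 := by
  intro δ₀ hδ₀
  set c : ℂ := ((√(2 * k) / δ₀ : ℝ) : ℂ)
  have hc : ‖c‖ ^ 2 = 2 * k / δ₀ ^ 2 := by
    rw [Complex.norm_real, Real.norm_eq_abs, sq_abs, div_pow, Real.sq_sqrt (by positivity)]
  have hc0 : c ≠ 0 := by
    have : (0 : ℝ) < k := Nat.cast_pos.mpr hk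
    exact Complex.ofReal_ne_zero.mpr (by positivity)
  obtain ⟨a, ha⟩ := exists_gaussianInt_sum_smul_near s (fun j => (hs j).le) (smul_mem _ c hspan)
  have hclose : ‖c • φ - ∑ j, (a j : ℂ) • s j‖ ≤ δ₀ * ‖c‖ := by
    refine (sq_le_sq₀ (norm_nonneg _) (by positivity)).mp ?_
    rw [mul_pow, hc, mul_div_cancel₀ _ (by positivity)]
    linarith [(Nat.cast_nonneg k : (0 : ℝ) ≤ k)]
  have hψ := memBW_sum_smul s hsBW a
  refine ⟨⟨c, _, hc0, hψ, hclose, hc.le⟩, ?_⟩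
  calc bwNormApprox n δ₀ φ ≤ ‖c • φ‖ ^ 2 := bwNormApprox_le_sq_norm_smul hc0 hψ hclose
    _ = 2 * k / δ₀ ^ 2 := by rw [norm_smul, hφ, mul_one, hc]
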